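/- arXiv:2602.05076 — 2 statements merged into one kernel-verified Lean document; each statement's English description precedes it below -/
import Mathlib

section
/- For every r ≥ 1, the square of the 3-extremal ideal is integrally closed: \overline{E_3^2} = E_3^2. More precisely, every monomial y^b with exponents b_1,b_2,b_3,b_{12},b_{13},b_{23},b_{123} satisfying: there exist nonnegative rationals α_1,α_2,α_3 with α_1+α_2+α_3 = 2, b_{123} ≥ 2, b_{ij} ≥ α_i+α_j, b_i ≥ α_i, is divisible by ε_i ε_j for some i,j ∈ {1,2,3}. -/
open MvPolynomial

/-- Index type: nonempty subsets of `[q]`. -/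
abbrev EIdx (q : ℕ) := {A : Finset (Fin q) // A.Nonempty}

/-- The generator `ε_i = ∏_{A ∋ i} y_A` of the extremal ideal. -/
noncomputable def extGen (k : Type*) [Field k] (q : ℕ) (i : Fin q) :
    MvPolynomial (EIdx q) k :=
  ∏ A : EIdx q, if i ∈ A.1 then X A else 1

/-- The `q`-extremal ideal `E_q = (ε_1, …, ε_q)`. -/
noncomputable def extIdeal (k : Type*) [Field k] (q : ℕ) :
    Ideal (MvPolynomial (EIdx q) k) :=
  Ideal.span (Set.range (extGen k q))

/-- The monomial `y^b = ∏_A y_A^{b_A}`. -/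
noncomputable def ymon (k : Type*) [Field k] (q : ℕ) (b : EIdx q → ℕ) :
    MvPolynomial (EIdx q) k :=
  ∏ A : EIdx q, X A ^ b A

/-- The integral closure of an ideal `J`. -/
def idealIntCl {R : Type*} [CommRing R] (J : Ideal R) : Set R :=
  {x | ∃ s : ℕ, 0 < s ∧ ∃ a : ℕ → R,
    (∀ i ∈ Finset.Icc 1 s, a i ∈ J ^ i) ∧
    x ^ s + ∑ i ∈ Finset.Icc 1 s, a i * x ^ (s - i) = 0}

/-! A weight `w` on the variables defines the monomial valuation `v_w` (weighted order), with
`v_w(ε_i) = ∑_{A ∋ i} w_A`. If `v_w(ε_i) ≥ m` for all `i`, then `v_w ≥ r m` on `E_q^r`, hence on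
its integral closure; and `v_w(x)` is at most the weight of each exponent in the support of `x`.
So every such exponent `b` passes all these weight tests, and so does any `b` admitting a fractional
decomposition `α`, by double counting. For `q = 3`, nine weights already force `b` to dominate the
exponent of some `ε_1^{c_1} ε_2^{c_2} ε_3^{c_3}` with `c_1 + c_2 + c_3 = r`, so `y^b ∈ E_3^r`. -/

namespace AddValuation

variable {R : Type*} [CommRing R] (v : AddValuation R ℕ∞) {m : ℕ}

theorem le_of_mem_span {g : ℕ∞} {s : Set R} (hs : ∀ a ∈ s, g ≤ v a) {a : R}
    (ha : a ∈ Ideal.span s) : g ≤ v a := by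
  induction ha using Submodule.span_induction with
  | mem a h => exact hs a h
  | zero => simp
  | add a b _ _ ha hb => exact v.map_le_add ha hb
  | smul c a _ ha => exact (v.map_mul c a).symm ▸ le_add_left ha

theorem le_of_mem_pow {I : Ideal R} (hI : ∀ a ∈ I, (m : ℕ∞) ≤ v a) {n : ℕ} {a : R}
    (ha : a ∈ I ^ n) : ((n * m : ℕ) : ℕ∞) ≤ v a := by
  induction n generalizing a with
  | zero => simp
  | succ n ih =>
    rw [pow_succ] at ha
    refine Submodule.mul_induction_on ha (fun x hx y hy => ?_) (fun x y => v.map_le_add)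
    rw [v.map_mul, add_mul, Nat.cast_add, one_mul]
    exact add_le_add (ih hx) (hI y hy)

theorem le_of_mem_idealIntCl {I : Ideal R} (hI : ∀ a ∈ I, (m : ℕ∞) ≤ v a) {r : ℕ} {x : R}
    (hx : x ∈ idealIntCl (I ^ r)) : ((r * m : ℕ) : ℕ∞) ≤ v x := by
  -- If `v x < r m`, every term `a_i x^(s-i)` has value `> s • v x = v (x^s)`.
  obtain ⟨s, -, a, ha, hsum⟩ := hx
  by_contra! hlt
  obtain ⟨t, ht⟩ : ∃ t : ℕ, v x = t :=
    (ENat.ne_top_iff_exists.mp (ne_top_of_lt hlt)).imp fun _ h => h.symm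
  have hlt' : t < r * m := by exact_mod_cast ht ▸ hlt
  have hterm : ∀ i ∈ Finset.Icc 1 s, ((s * t : ℕ) : ℕ∞) < v (a i * x ^ (s - i)) := by
    intro i hi
    obtain ⟨hi1, his⟩ := Finset.mem_Icc.mp hi
    have hai : (((r * i) * m : ℕ) : ℕ∞) ≤ v (a i) :=
      v.le_of_mem_pow hI (pow_mul I r i ▸ ha i hi)
    rw [v.map_mul, v.map_pow, ht]
    refine lt_of_lt_of_le ?_ (add_le_add_left hai _)
    obtain ⟨u, rfl⟩ := Nat.exists_eq_add_of_le his
    rw [Nat.add_sub_cancel_left, nsmul_eq_mul]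
    norm_cast
    nlinarith
  have hsum_val : v (∑ i ∈ Finset.Icc 1 s, a i * x ^ (s - i)) = ((s * t : ℕ) : ℕ∞) := by
    rw [eq_neg_of_add_eq_zero_right hsum, v.map_neg, v.map_pow, ht, nsmul_eq_mul, Nat.cast_mul]
  exact (v.map_lt_sum (ENat.natCast_ne_top _) hterm).ne' hsum_val

end AddValuation

theorem subset_idealIntCl {R : Type*} [CommRing R] (J : Ideal R) : (J : Set R) ⊆ idealIntCl J :=
  fun x hx => ⟨1, one_pos, fun _ => -x, by simpa using neg_mem hx, by simp⟩

theorem exists_mul_eq_prod_pow_of_sum_eq_two {ι M : Type*} [Fintype ι] [CommMonoid M]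
    (f : ι → M) {c : ι → ℕ} (hc : ∑ i, c i = 2) : ∃ i j, f i * f j = ∏ l, f l ^ c l := by
  obtain ⟨i, j, hij⟩ := Multiset.card_eq_two.mp
    (show Multiset.card (∑ l, c l • {l}) = 2 by simpa using hc)
  refine ⟨i, j, ?_⟩
  have := congrArg (fun s => (Multiset.mapAddMonoidHom f s).prod) hij
  simp only [map_sum, map_nsmul, Multiset.prod_sum] at this
  simpa [Multiset.prod_nsmul] using this.symm

namespace MvPolynomial

variable {σ R : Type*} [CommRing R] [IsDomain R]

noncomputable def weightedOrderValuation (w : σ → ℕ) : AddValuation (MvPolynomial σ R) ℕ∞ :=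
  (AddValuation.of (MvPowerSeries.weightedOrder w) (MvPowerSeries.weightedOrder_zero w)
    (MvPowerSeries.weightedOrder_one w) (fun _ _ => MvPowerSeries.min_weightedOrder_le_add w)
    (MvPowerSeries.weightedOrder_mul w)).comap coeToMvPowerSeries.ringHom

theorem weightedOrderValuation_apply (w : σ → ℕ) (f : MvPolynomial σ R) :
    weightedOrderValuation w f = MvPowerSeries.weightedOrder w (f : MvPowerSeries σ R) := rfl

theorem weightedOrderValuation_le {w : σ → ℕ} {f : MvPolynomial σ R} {d : σ →₀ ℕ}
    (hd : d ∈ f.support) : weightedOrderValuation w f ≤ Finsupp.weight w d :=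
  (weightedOrderValuation_apply w f).trans_le
    (MvPowerSeries.weightedOrder_le w (by rwa [coeff_coe, ← mem_support_iff]))

theorem weightedOrderValuation_monomial (w : σ → ℕ) (d : σ →₀ ℕ) {a : R} (ha : a ≠ 0) :
    weightedOrderValuation w (monomial d a) = Finsupp.weight w d := by
  rw [weightedOrderValuation_apply, coe_monomial,
    MvPowerSeries.weightedOrder_monomial_of_ne_zero w ha]

end MvPolynomial

section ExtremalIdeal

open MvPolynomial

variable {k : Type*} [Field k] {q : ℕ}

theorem ymon_eq_monomial (b : EIdx q → ℕ) :
    ymon k q b = monomial (Finsupp.equivFunOnFinite.symm b) 1 := by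
  rw [ymon, monomial_eq, C_1, one_mul, Finsupp.prod_fintype _ _ fun _ => pow_zero _]
  rfl

theorem monomial_eq_C_mul_ymon (d : EIdx q →₀ ℕ) (a : k) : monomial d a = C a * ymon k q d := by
  rw [ymon_eq_monomial, Finsupp.equivFunOnFinite_symm_coe, C_mul_monomial, mul_one]

theorem ymon_dvd_ymon {b b' : EIdx q → ℕ} (h : b ≤ b') : ymon k q b ∣ ymon k q b' :=
  Finset.prod_dvd_prod_of_dvd _ _ fun A _ => pow_dvd_pow _ (h A)

theorem extGen_eq_ymon (i : Fin q) : extGen k q i = ymon k q fun A => if i ∈ A.1 then 1 else 0 :=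
  Finset.prod_congr rfl fun A _ => by split_ifs <;> simp_all

theorem prod_extGen_pow (c : Fin q → ℕ) :
    ∏ i, extGen k q i ^ c i = ymon k q fun A => ∑ i ∈ A.1, c i := by
  simp_rw [extGen, ← Finset.prod_pow, ymon]
  rw [Finset.prod_comm]
  refine Finset.prod_congr rfl fun A _ => ?_
  simp_rw [ite_pow, one_pow]
  rw [Finset.prod_ite_mem, Finset.univ_inter, Finset.prod_pow_eq_pow_sum]

theorem prod_extGen_pow_mem (c : Fin q → ℕ) :
    ∏ i, extGen k q i ^ c i ∈ extIdeal k q ^ ∑ i, c i := by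
  rw [← Finset.prod_pow_eq_pow_sum]
  exact Ideal.prod_mem_prod fun i _ =>
    Ideal.pow_mem_pow (Ideal.subset_span (Set.mem_range_self i)) _

theorem weightedOrderValuation_ymon (w : EIdx q → ℕ) (b : EIdx q → ℕ) :
    weightedOrderValuation w (ymon k q b) = ((∑ A, b A * w A : ℕ) : ℕ∞) := by
  rw [ymon_eq_monomial, weightedOrderValuation_monomial w _ one_ne_zero, Finsupp.weight_eq_sum]
  simp

end ExtremalIdeal

open MvPolynomial in
theorem mem_extIdeal_pow_of_forall_mem_support {k : Type*} [Field k] {q r : ℕ}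
    {x : MvPolynomial (EIdx q) k}
    (h : ∀ d ∈ x.support, ∃ c : Fin q → ℕ, ∑ i, c i = r ∧ ∀ A : EIdx q, ∑ i ∈ A.1, c i ≤ d A) :
    x ∈ extIdeal k q ^ r := by
  rw [← support_sum_monomial_coeff x]
  refine Ideal.sum_mem _ fun d hd => ?_
  obtain ⟨c, rfl, hc⟩ := h d hd
  rw [monomial_eq_C_mul_ymon]
  refine Ideal.mul_mem_left _ _ (Ideal.mem_of_dvd _ ?_ (prod_extGen_pow_mem c))
  rw [prod_extGen_pow]
  exact ymon_dvd_ymon hc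

section WeightBounds

open MvPolynomial Finset

variable {q r : ℕ}

def MeetsWeightBounds (q r : ℕ) (b : EIdx q → ℕ) : Prop :=
  ∀ (w : EIdx q → ℕ) (m : ℕ), (∀ i, m ≤ ∑ A with i ∈ A.1, w A) → r * m ≤ ∑ A, b A * w A

theorem meetsWeightBounds_of_mem_idealIntCl {k : Type*} [Field k] {x : MvPolynomial (EIdx q) k}
    (hx : x ∈ idealIntCl (extIdeal k q ^ r)) {d : EIdx q →₀ ℕ} (hd : d ∈ x.support) :
    MeetsWeightBounds q r d := by
  intro w m hm
  set v : AddValuation (MvPolynomial (EIdx q) k) ℕ∞ := weightedOrderValuation w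
  have hgen : ∀ a ∈ Set.range (extGen k q), (m : ℕ∞) ≤ v a := by
    rintro _ ⟨i, rfl⟩
    rw [extGen_eq_ymon, weightedOrderValuation_ymon, Nat.cast_le]
    simpa [ite_mul, sum_filter] using hm i
  have := (v.le_of_mem_idealIntCl (fun _ => v.le_of_mem_span hgen) hx).trans
    (weightedOrderValuation_le hd)
  rw [Finsupp.weight_eq_sum] at this
  exact_mod_cast this

theorem meetsWeightBounds_of_fractional {b : EIdx q → ℕ} (α : Fin q → ℚ) (hα0 : ∀ i, 0 ≤ α i)
    (hαr : ∑ i, α i = r) (hαb : ∀ A : EIdx q, ∑ i ∈ A.1, α i ≤ b A) :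
    MeetsWeightBounds q r b := by
  intro w m hm
  have key : (r * m : ℚ) ≤ ∑ A, (b A : ℚ) * w A := calc
    (r * m : ℚ) = ∑ i, α i * m := by rw [← sum_mul, hαr]
    _ ≤ ∑ i, α i * ∑ A with i ∈ A.1, (w A : ℚ) :=
      sum_le_sum fun i _ => mul_le_mul_of_nonneg_left (by exact_mod_cast hm i) (hα0 i)
    _ = ∑ A, (∑ i ∈ A.1, α i) * w A := by
      simp_rw [mul_sum, sum_mul, sum_filter]
      rw [sum_comm]
      exact sum_congr rfl fun A _ => by rw [sum_ite_mem, univ_inter]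
    _ ≤ ∑ A, (b A : ℚ) * w A :=
      sum_le_sum fun A _ => mul_le_mul_of_nonneg_right (hαb A) (Nat.cast_nonneg _)
  exact_mod_cast key

theorem MeetsWeightBounds.le_sum {b : EIdx q → ℕ} (h : MeetsWeightBounds q r b)
    (S : Finset (EIdx q)) (m : ℕ) (hm : ∀ i, m ≤ #{A ∈ S | i ∈ A.1}) : r * m ≤ ∑ A ∈ S, b A := by
  have := h (fun A => if A ∈ S then 1 else 0) m fun i => by
    convert hm i using 1
    rw [sum_boole, Nat.cast_id]
    congr 1
    ext A
    simp [and_comm]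
  simpa [sum_ite_mem] using this

end WeightBounds

namespace EIdx

def s1 : EIdx 3 := ⟨{0}, by decide⟩
def s2 : EIdx 3 := ⟨{1}, by decide⟩
def s3 : EIdx 3 := ⟨{2}, by decide⟩
def s12 : EIdx 3 := ⟨{0, 1}, by decide⟩
def s13 : EIdx 3 := ⟨{0, 2}, by decide⟩
def s23 : EIdx 3 := ⟨{1, 2}, by decide⟩
def s123 : EIdx 3 := ⟨{0, 1, 2}, by decide⟩

@[simp] theorem val_s1 : s1.1 = {0} := rfl
@[simp] theorem val_s2 : s2.1 = {1} := rfl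
@[simp] theorem val_s3 : s3.1 = {2} := rfl
@[simp] theorem val_s12 : s12.1 = {0, 1} := rfl
@[simp] theorem val_s13 : s13.1 = {0, 2} := rfl
@[simp] theorem val_s23 : s23.1 = {1, 2} := rfl
@[simp] theorem val_s123 : s123.1 = {0, 1, 2} := rfl

theorem cases_three (A : EIdx 3) :
    A = s1 ∨ A = s2 ∨ A = s3 ∨ A = s12 ∨ A = s13 ∨ A = s23 ∨ A = s123 := by
  revert A
  decide

end EIdx

open EIdx Finset in
theorem MeetsWeightBounds.exists_exponents {r : ℕ} {b : EIdx 3 → ℕ}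
    (h : MeetsWeightBounds 3 r b) :
    ∃ c : Fin 3 → ℕ, ∑ i, c i = r ∧ ∀ A : EIdx 3, ∑ i ∈ A.1, c i ≤ b A := by
  have h1 := h.le_sum {s123} 1 (by decide)
  have h2 := h.le_sum {s1, s23} 1 (by decide)
  have h3 := h.le_sum {s2, s13} 1 (by decide)
  have h4 := h.le_sum {s3, s12} 1 (by decide)
  have h5 := h.le_sum {s12, s13} 1 (by decide)
  have h6 := h.le_sum {s12, s23} 1 (by decide)
  have h7 := h.le_sum {s13, s23} 1 (by decide)
  have h8 := h.le_sum {s1, s2, s3} 1 (by decide)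
  have h9 := h.le_sum {s12, s13, s23} 2 (by decide)
  simp +decide only [sum_insert, mem_insert, mem_singleton, sum_singleton,
    mul_one] at h1 h2 h3 h4 h5 h6 h7 h8 h9
  -- Greedy choice: each `c_i` is the least value the constraints on the later coordinates allow.
  set c1 := max (r - b s23) (r - (b s2 + b s3))
  set c2 := max (r - c1 - b s3) (r - b s13)
  refine ⟨![c1, c2, r - c1 - c2], ?_, fun A => ?_⟩
  · simp [Fin.sum_univ_three]
    omega
  · rcases cases_three A with rfl | rfl | rfl | rfl | rfl | rfl | rfl <;> simp <;> omega

theorem stmt8 (k : Type*) [Field k] :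
    -- `E_3` is normal: every power is integrally closed
    (∀ r : ℕ, 1 ≤ r →
      idealIntCl ((extIdeal k 3) ^ r) = ((extIdeal k 3) ^ r : Ideal _)) ∧
    -- more precisely: membership criterion for the closure of `E_3^2` implies
    -- divisibility by some `ε_i ε_j`
    (∀ b : EIdx 3 → ℕ,
      (∃ α : Fin 3 → ℚ, (∀ i, 0 ≤ α i) ∧ (∑ i, α i = 2) ∧
        ∀ A : EIdx 3, (∑ i ∈ A.1, α i) ≤ (b A : ℚ)) →
      ∃ i j : Fin 3, extGen k 3 i * extGen k 3 j ∣ ymon k 3 b) := by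
  refine ⟨fun r _ => (subset_idealIntCl _).antisymm' fun x hx => ?_,
    fun b ⟨α, hα0, hα2, hαb⟩ => ?_⟩
  · exact mem_extIdeal_pow_of_forall_mem_support fun d hd =>
      (meetsWeightBounds_of_mem_idealIntCl hx hd).exists_exponents
  · obtain ⟨c, hc, hcb⟩ :=
      (meetsWeightBounds_of_fractional α hα0 (by exact_mod_cast hα2) hαb).exists_exponents
    obtain ⟨i, j, hij⟩ := exists_mul_eq_prod_pow_of_sum_eq_two (extGen k 3) hc
    refine ⟨i, j, ?_⟩
    rw [hij, prod_extGen_pow]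
    exact ymon_dvd_ymon hcb
end

section
/- Let Q = (y_{A_1}^{r_1}, …, y_{A_h}^{r_h}) be an irreducible primary monomial ideal in S_[q] with distinct nonempty A_1,…,A_h ⊆ [q] and r_i > 0, and let I be an ideal minimally generated by square-free monomials with associated map ψ_I. If θ_I(A_i) ≠ ∅ for all i, then the ideal generated by ψ_I(Q) equals the intersection over all tuples (k_1,…,k_h) with x_{k_i} ∈ θ_I(A_i) of the ideals (x_{k_1}^{r_1}, …, x_{k_h}^{r_h}), and this is an irredundant irreducible decomposition. -/
open MvPolynomial

/-- `θ_I(A)`, where the square-free monomial `m_j` is recorded by its support `S j`. -/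
def thetaSet {n q : ℕ} (S : Fin q → Finset (Fin n)) (A : Finset (Fin q)) :
    Finset (Fin n) :=
  A.inf S \ Aᶜ.sup S

/-- The ring homomorphism `ψ_I : S_[q] → R`, `y_A ↦ ∏_{x ∈ θ_I(A)} x`. -/
noncomputable def psiI (k : Type*) [Field k] {n q : ℕ}
    (S : Fin q → Finset (Fin n)) :
    MvPolynomial (EIdx q) k →+* MvPolynomial (Fin n) k :=
  (aeval fun A : EIdx q => ∏ x ∈ thetaSet S A.1, X x).toRingHom

/-!
A monomial lies in `(∏_{x ∈ θ_1} x^{r_1}, …, ∏_{x ∈ θ_h} x^{r_h})` iff for some `i` every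
`x ∈ θ_i` occurs with exponent at least `r_i`; by choice this is the same as: for every choice
`x_{k_i} ∈ θ_i` some `x_{k_i}` occurs with exponent at least `r_i`, which is membership in the
intersection of the `(x_{k_1}^{r_1}, …, x_{k_h}^{r_h})`. As `ψ_I(y_A) = ∏_{x ∈ θ_I(A)} x`, this
gives the decomposition. Since the `θ_I(A_i)` are pairwise disjoint, lowering by one the exponent
of each `x_{k_i}` in `∏_i ∏_{x ∈ θ_i} x^{r_i}` yields a monomial outside the component of
`(k_1, …, k_h)` but inside every other one, so the decomposition is irredundant.
-/

open Function

lemma mem_thetaSet_iff {n q : ℕ} {S : Fin q → Finset (Fin n)} {A : Finset (Fin q)} {x : Fin n} :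
    x ∈ thetaSet S A ↔ ∀ j, x ∈ S j ↔ j ∈ A := by
  rw [thetaSet, Finset.mem_sdiff, ← Finset.singleton_subset_iff, Finset.le_inf_iff,
    Finset.mem_sup]
  simp only [Finset.singleton_subset_iff, Finset.mem_compl, not_exists, not_and]
  exact ⟨fun h j => ⟨fun hx => by_contra fun hj => h.2 j hj hx, h.1 j⟩,
    fun h => ⟨fun j => (h j).2, fun j hj hx => hj ((h j).1 hx)⟩⟩

lemma pairwise_disjoint_thetaSet {n q : ℕ} (S : Fin q → Finset (Fin n)) :
    Pairwise (Disjoint on thetaSet S) := by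
  intro A B hAB
  refine Finset.disjoint_left.2 fun x hxA hxB => hAB ?_
  ext j
  rw [← mem_thetaSet_iff.1 hxA j, mem_thetaSet_iff.1 hxB j]

lemma psiI_X (k : Type*) [Field k] {n q : ℕ} (S : Fin q → Finset (Fin n)) (A : EIdx q) :
    psiI k S (X A) = ∏ x ∈ thetaSet S A.1, X x := by
  simp [psiI]

section MonomialIdeal

variable {σ ι R : Type*} [CommSemiring R]

lemma mem_span_range_monomial_one_iff {D : ι → σ →₀ ℕ} {p : MvPolynomial σ R} :
    p ∈ Ideal.span (Set.range fun i => monomial (D i) (1 : R)) ↔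
      ∀ e ∈ p.support, ∃ i, D i ≤ e := by
  rw [show (Set.range fun i => monomial (D i) (1 : R)) = (monomial · 1) '' Set.range D from
    Set.range_comp (monomial · (1 : R)) D, mem_ideal_span_monomial_image]
  simp

lemma sum_single_le_iff {s : Finset σ} {r : ℕ} {e : σ →₀ ℕ} :
    ∑ x ∈ s, Finsupp.single x r ≤ e ↔ ∀ x ∈ s, r ≤ e x := by
  classical
  simp only [Finsupp.le_def, Finsupp.finsetSum_apply, Finsupp.single_apply, Finset.sum_ite_eq']
  refine ⟨fun h x hx => by simpa [hx] using h x, fun h x => ?_⟩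
  split_ifs with hx
  exacts [h x hx, Nat.zero_le _]

lemma prod_X_pow_eq_monomial_sum_single {s : Finset σ} {r : ℕ} :
    ∏ x ∈ s, (X x : MvPolynomial σ R) ^ r = monomial (∑ x ∈ s, Finsupp.single x r) 1 := by
  simp [monomial_sum_one, X_pow_eq_monomial]

lemma mem_span_range_X_pow_iff {f : ι → σ} {r : ι → ℕ} {p : MvPolynomial σ R} :
    p ∈ Ideal.span (Set.range fun i => (X (f i) : MvPolynomial σ R) ^ r i) ↔
      ∀ e ∈ p.support, ∃ i, r i ≤ e (f i) := by
  simp [X_pow_eq_monomial, mem_span_range_monomial_one_iff, Finsupp.single_le_iff]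

lemma monomial_mem_span_range_X_pow_iff [Nontrivial R] {f : ι → σ} {r : ι → ℕ}
    {e : σ →₀ ℕ} :
    monomial e (1 : R) ∈ Ideal.span (Set.range fun i => (X (f i) : MvPolynomial σ R) ^ r i) ↔
      ∃ i, r i ≤ e (f i) := by
  classical
  rw [mem_span_range_X_pow_iff, support_monomial, if_neg one_ne_zero]
  simp

lemma mem_span_range_prod_X_pow_iff {θ : ι → Finset σ} {r : ι → ℕ} {p : MvPolynomial σ R} :
    p ∈ Ideal.span (Set.range fun i => ∏ x ∈ θ i, (X x : MvPolynomial σ R) ^ r i) ↔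
      ∀ e ∈ p.support, ∃ i, ∀ x ∈ θ i, r i ≤ e x := by
  simp [prod_X_pow_eq_monomial_sum_single, mem_span_range_monomial_one_iff, sum_single_le_iff]

lemma exists_forall_mem_iff_forall_choice {θ : ι → Finset σ} {P : ι → σ → Prop} :
    (∃ i, ∀ x ∈ θ i, P i x) ↔ ∀ f : {f : ι → σ // ∀ i, f i ∈ θ i}, ∃ i, P i (f.1 i) := by
  refine ⟨fun ⟨i, hi⟩ f => ⟨i, hi _ (f.2 i)⟩, fun h => by_contra fun hno => ?_⟩
  push Not at hno
  choose f hfθ hfP using hno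
  obtain ⟨i, hi⟩ := h ⟨f, hfθ⟩
  exact hfP i hi

theorem span_range_prod_X_pow_eq_iInf (θ : ι → Finset σ) (r : ι → ℕ) :
    Ideal.span (Set.range fun i => ∏ x ∈ θ i, (X x : MvPolynomial σ R) ^ r i) =
      ⨅ f : {f : ι → σ // ∀ i, f i ∈ θ i},
        Ideal.span (Set.range fun i => (X (f.1 i) : MvPolynomial σ R) ^ r i) := by
  ext p
  simp only [Submodule.mem_iInf, mem_span_range_X_pow_iff, mem_span_range_prod_X_pow_iff]
  exact ⟨fun h f e he => exists_forall_mem_iff_forall_choice.1 (h e he) f,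
    fun h e he => exists_forall_mem_iff_forall_choice.2 fun f => h f e he⟩

lemma sum_sum_single_apply_of_mem [Fintype ι] {θ : ι → Finset σ}
    (hθ : Pairwise (Disjoint on θ)) (g : ι → σ → ℕ) {i : ι} {y : σ} (hy : y ∈ θ i) :
    (∑ j, ∑ x ∈ θ j, Finsupp.single x (g j x)) y = g i y := by
  classical
  simp only [Finsupp.finsetSum_apply, Finsupp.single_apply, Finset.sum_ite_eq']
  rw [Finset.sum_eq_single i, if_pos hy]
  · exact fun j _ hji => if_neg fun hyj => Finset.disjoint_left.1 (hθ hji) hyj hy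
  · exact fun hi => absurd (Finset.mem_univ i) hi

theorem not_iInf_ne_le_span_range_X_pow [Nontrivial R] [Fintype ι] {θ : ι → Finset σ}
    (hθ : Pairwise (Disjoint on θ)) {r : ι → ℕ} (hr : ∀ i, 0 < r i)
    (f : {f : ι → σ // ∀ i, f i ∈ θ i}) :
    ¬ (⨅ f' : {f : ι → σ // ∀ i, f i ∈ θ i}, ⨅ _ : f' ≠ f,
          Ideal.span (Set.range fun i => (X (f'.1 i) : MvPolynomial σ R) ^ r i)) ≤
        Ideal.span (Set.range fun i => (X (f.1 i) : MvPolynomial σ R) ^ r i) := by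
  classical
  -- `x^w` is `∏ i, ∏ x ∈ θ i, x ^ r i` with each exponent at `f i` lowered by one
  set w : σ →₀ ℕ := ∑ j, ∑ x ∈ θ j, Finsupp.single x (r j - if x = f.1 j then 1 else 0)
  have hw : ∀ i, ∀ y ∈ θ i, w y = r i - if y = f.1 i then 1 else 0 := fun i y hy =>
    sum_sum_single_apply_of_mem hθ (fun j x => r j - if x = f.1 j then 1 else 0) hy
  intro hle
  have hmem : monomial w (1 : R) ∈ ⨅ f' : {f : ι → σ // ∀ i, f i ∈ θ i}, ⨅ _ : f' ≠ f,
      Ideal.span (Set.range fun i => (X (f'.1 i) : MvPolynomial σ R) ^ r i) := by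
    simp only [Submodule.mem_iInf, monomial_mem_span_range_X_pow_iff]
    intro f' hf'
    obtain ⟨i, hi⟩ : ∃ i, f'.1 i ≠ f.1 i := by
      by_contra! h
      exact hf' (Subtype.ext (funext h))
    exact ⟨i, by rw [hw i _ (f'.2 i), if_neg hi, Nat.sub_zero]⟩
  obtain ⟨i, hi⟩ := monomial_mem_span_range_X_pow_iff.1 (hle hmem)
  rw [hw i _ (f.2 i), if_pos rfl] at hi
  exact absurd hi (by have := hr i; omega)

end MonomialIdeal

theorem stmt11_general (k : Type*) [Field k] (n q h : ℕ)
    (S : Fin q → Finset (Fin n))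
    (A : Fin h → EIdx q) (hAinj : Function.Injective A)
    (rr : Fin h → ℕ) (hrr : ∀ i, 0 < rr i)
    -- the irreducible primary monomial ideal `Q = (y_{A_1}^{r_1}, …, y_{A_h}^{r_h})`
    (Q : Ideal (MvPolynomial (EIdx q) k))
    (hQ : Q = Ideal.span (Set.range fun i : Fin h => (X (A i)) ^ rr i)) :
    -- `ψ_I(Q)` is the intersection of the ideals `(x_{k_1}^{r_1}, …, x_{k_h}^{r_h})`
    Ideal.map (psiI k S) Q =
      (⨅ kk : {f : Fin h → Fin n // ∀ i, f i ∈ thetaSet S (A i).1},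
        Ideal.span (Set.range fun i : Fin h =>
          (X (kk.1 i) : MvPolynomial (Fin n) k) ^ rr i)) ∧
    -- and this decomposition is irredundant
    (∀ kk : {f : Fin h → Fin n // ∀ i, f i ∈ thetaSet S (A i).1},
      ¬ ((⨅ kk' : {f : Fin h → Fin n // ∀ i, f i ∈ thetaSet S (A i).1},
            ⨅ _ : kk' ≠ kk,
            Ideal.span (Set.range fun i : Fin h =>
              (X (kk'.1 i) : MvPolynomial (Fin n) k) ^ rr i)) ≤
          Ideal.span (Set.range fun i : Fin h =>
            (X (kk.1 i) : MvPolynomial (Fin n) k) ^ rr i))) := by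
  have hmap : Ideal.map (psiI k S) Q = Ideal.span (Set.range fun i =>
      ∏ x ∈ thetaSet S (A i).1, (X x : MvPolynomial (Fin n) k) ^ rr i) := by
    rw [hQ, Ideal.map_span, ← Set.range_comp]
    simp only [Function.comp_def, map_pow, psiI_X, Finset.prod_pow]
  have hθ : Pairwise (Disjoint on fun i => thetaSet S (A i).1) :=
    (pairwise_disjoint_thetaSet S).comp_of_injective (Subtype.val_injective.comp hAinj)
  exact ⟨hmap.trans (span_range_prod_X_pow_eq_iInf _ _),
    not_iInf_ne_le_span_range_X_pow hθ hrr⟩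

theorem stmt11 (k : Type*) [Field k] (n q h : ℕ)
    (S : Fin q → Finset (Fin n))
    (m : Fin q → MvPolynomial (Fin n) k)
    (hm : ∀ j, m j = ∏ x ∈ S j, X x)
    (I : Ideal (MvPolynomial (Fin n) k))
    (hI : I = Ideal.span (Set.range m))
    (hminI : ∀ i j : Fin q, i ≠ j → ¬ m i ∣ m j)
    (A : Fin h → EIdx q) (hAinj : Function.Injective A)
    (rr : Fin h → ℕ) (hrr : ∀ i, 0 < rr i)
    (hth : ∀ i, (thetaSet S (A i).1).Nonempty)
    -- the irreducible primary monomial ideal `Q = (y_{A_1}^{r_1}, …, y_{A_h}^{r_h})`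
    (Q : Ideal (MvPolynomial (EIdx q) k))
    (hQ : Q = Ideal.span (Set.range fun i : Fin h => (X (A i)) ^ rr i)) :
    -- `ψ_I(Q)` is the intersection of the ideals `(x_{k_1}^{r_1}, …, x_{k_h}^{r_h})`
    Ideal.map (psiI k S) Q =
      (⨅ kk : {f : Fin h → Fin n // ∀ i, f i ∈ thetaSet S (A i).1},
        Ideal.span (Set.range fun i : Fin h =>
          (X (kk.1 i) : MvPolynomial (Fin n) k) ^ rr i)) ∧
    -- and this decomposition is irredundant
    (∀ kk : {f : Fin h → Fin n // ∀ i, f i ∈ thetaSet S (A i).1},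
      ¬ ((⨅ kk' : {f : Fin h → Fin n // ∀ i, f i ∈ thetaSet S (A i).1},
            ⨅ _ : kk' ≠ kk,
            Ideal.span (Set.range fun i : Fin h =>
              (X (kk'.1 i) : MvPolynomial (Fin n) k) ^ rr i)) ≤
          Ideal.span (Set.range fun i : Fin h =>
            (X (kk.1 i) : MvPolynomial (Fin n) k) ^ rr i))) :=
  stmt11_general k n q h S A hAinj rr hrr Q hQ
end
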